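/- arXiv:1004.3349 — 3 statements merged into one kernel-verified Lean document; each statement's English description precedes it below -/
import Mathlib

section
/- Let 0 < κ < 1, let n ≥ 3 be an integer, and define f(r) = (r/(1+r))^κ. Then the radial Laplacian of f(r)/r in dimension n, namely r^(1-n) · d/dr ( r^(n-1) · d/dr (f(r)/r) ), satisfies Δ(f/r)(r) ≤ - κ(1-κ) / ( r^(3-κ) (1+r)^(2+κ) ) for all r > 0. -/
open Real Filter Topology

private lemma aux2 (a b : ℝ) {r : ℝ} (hr : 0 < r) :
    HasDerivAt (fun s : ℝ => s ^ a * (1 + s) ^ b)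
      (a * r ^ (a - 1) * (1 + r) ^ b + r ^ a * (b * (1 + r) ^ (b - 1) * 1)) r := by
  have h1 : HasDerivAt (fun s : ℝ => s ^ a) (a * r ^ (a - 1)) r :=
    Real.hasDerivAt_rpow_const (Or.inl hr.ne')
  have h2 : HasDerivAt (fun s : ℝ => (1 + s) ^ b) (b * (1 + r) ^ (b - 1) * 1) r := by
    have h : HasDerivAt (fun s : ℝ => 1 + s) 1 r := (hasDerivAt_id r).const_add 1
    have h' := h.rpow_const (p := b) (Or.inl (by positivity))
    convert h' using 1
    ring
  exact h1.mul h2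

private lemma aux3 (a b c : ℝ) {r : ℝ} (hr : 0 < r) :
    HasDerivAt (fun s : ℝ => s ^ a * ((1 + s) ^ b * (c - s)))
      (a * r ^ (a - 1) * ((1 + r) ^ b * (c - r))
        + r ^ a * ((b * (1 + r) ^ (b - 1) * 1) * (c - r) + (1 + r) ^ b * (-1))) r := by
  have h1 : HasDerivAt (fun s : ℝ => s ^ a) (a * r ^ (a - 1)) r :=
    Real.hasDerivAt_rpow_const (Or.inl hr.ne')
  have h2 : HasDerivAt (fun s : ℝ => (1 + s) ^ b) (b * (1 + r) ^ (b - 1) * 1) r := by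
    have h : HasDerivAt (fun s : ℝ => 1 + s) 1 r := (hasDerivAt_id r).const_add 1
    have h' := h.rpow_const (p := b) (Or.inl (by positivity))
    convert h' using 1
    ring
  have h3 : HasDerivAt (fun s : ℝ => c - s) (-1) r := by
    simpa using (hasDerivAt_id r).const_sub c
  exact h1.mul (h2.mul h3)

theorem stmt1 (κ : ℝ) (hκ0 : 0 < κ) (hκ1 : κ < 1) (n : ℕ) (hn : 3 ≤ n)
    (f g : ℝ → ℝ)
    (hf : ∀ r : ℝ, f r = (r / (1 + r)) ^ κ)
    (hg : ∀ r : ℝ, g r = f r / r) :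
    ∀ r : ℝ, 0 < r →
      r ^ ((1 : ℝ) - (n : ℝ)) * deriv (fun s : ℝ => s ^ ((n : ℝ) - 1) * deriv g s) r
        ≤ -(κ * (1 - κ)) / (r ^ (3 - κ) * (1 + r) ^ (2 + κ)) := by
  intro r hr
  have hn' : (3 : ℝ) ≤ (n : ℝ) := by exact_mod_cast hn
  -- formula for deriv g on (0,∞)
  have hψ : ∀ s : ℝ, 0 < s →
      deriv g s = s ^ (κ - 2) * ((1 + s) ^ (-(κ + 1)) * ((κ - 1) - s)) := by
    intro s hs
    have hev : (fun t : ℝ => t ^ (κ - 1) * (1 + t) ^ (-κ)) =ᶠ[𝓝 s] g := by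
      filter_upwards [eventually_gt_nhds hs] with t ht
      rw [hg, hf, Real.div_rpow ht.le (by positivity), Real.rpow_neg (by positivity),
        Real.rpow_sub ht, Real.rpow_one]
      ring
    rw [← hev.deriv_eq, (aux2 (κ - 1) (-κ) hs).deriv]
    have e1 : s ^ (κ - 1) = s ^ (κ - 2) * s := by
      rw [show κ - 1 = (κ - 2) + 1 by ring, Real.rpow_add_one hs.ne']
    have e2 : (1 + s) ^ (-κ) = (1 + s) ^ (-(κ + 1)) * (1 + s) := by
      rw [show -κ = (-(κ + 1)) + 1 by ring, Real.rpow_add_one (by positivity)]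
    rw [show κ - 1 - 1 = κ - 2 by ring, show -κ - 1 = -(κ + 1) by ring, e1, e2]
    ring
  -- the function whose derivative we take agrees near r with an explicit one
  have hφ : (fun s : ℝ => s ^ ((n : ℝ) - 1) * deriv g s)
      =ᶠ[𝓝 r] (fun s : ℝ => s ^ ((n : ℝ) + κ - 3) * ((1 + s) ^ (-(κ + 1)) * ((κ - 1) - s))) := by
    filter_upwards [eventually_gt_nhds hr] with s hs
    rw [hψ s hs, show (n : ℝ) + κ - 3 = ((n : ℝ) - 1) + (κ - 2) by ring, Real.rpow_add hs]
    ring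
  rw [hφ.deriv_eq, (aux3 ((n : ℝ) + κ - 3) (-(κ + 1)) (κ - 1) hr).deriv]
  -- rewrite RHS
  have hRHS : -(κ * (1 - κ)) / (r ^ (3 - κ) * (1 + r) ^ (2 + κ))
      = -(κ * (1 - κ)) * (r ^ (κ - 3) * (1 + r) ^ (-(κ + 2))) := by
    rw [show κ - 3 = -(3 - κ) by ring, show -(κ + 2) = -(2 + κ) by ring,
      Real.rpow_neg hr.le, Real.rpow_neg (by positivity : (0:ℝ) ≤ 1 + r)]
    ring
  rw [hRHS]
  -- rewrite LHS
  have hu : r ^ ((n : ℝ) - 1) ≠ 0 := (Real.rpow_pos_of_pos hr _).ne'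
  have key : r ^ ((1 : ℝ) - (n : ℝ)) *
      (((n : ℝ) + κ - 3) * r ^ ((n : ℝ) + κ - 3 - 1) * ((1 + r) ^ (-(κ + 1)) * (κ - 1 - r))
        + r ^ ((n : ℝ) + κ - 3) * ((-(κ + 1) * (1 + r) ^ (-(κ + 1) - 1) * 1) * (κ - 1 - r)
          + (1 + r) ^ (-(κ + 1)) * (-1)))
      = r ^ (κ - 3) * (1 + r) ^ (-(κ + 2)) *
        (((n : ℝ) + κ - 3) * (1 + r) * (κ - 1 - r) - (κ + 1) * r * (κ - 1 - r) - r * (1 + r)) := by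
    have e0 : r ^ ((1 : ℝ) - (n : ℝ)) = (r ^ ((n : ℝ) - 1))⁻¹ := by
      rw [← Real.rpow_neg hr.le]; ring_nf
    have e1 : r ^ ((n : ℝ) + κ - 3 - 1) = r ^ ((n : ℝ) - 1) * r ^ (κ - 3) := by
      rw [← Real.rpow_add hr]; ring_nf
    have e2 : r ^ ((n : ℝ) + κ - 3) = r ^ ((n : ℝ) - 1) * (r ^ (κ - 3) * r) := by
      rw [show (n : ℝ) + κ - 3 = (((n : ℝ) - 1) + (κ - 3)) + 1 by ring,
        Real.rpow_add_one hr.ne', Real.rpow_add hr]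
      ring
    have e3 : (1 + r) ^ (-(κ + 1)) = (1 + r) ^ (-(κ + 2)) * (1 + r) := by
      rw [show -(κ + 1) = (-(κ + 2)) + 1 by ring, Real.rpow_add_one (by positivity)]
    have e4 : (1 + r) ^ (-(κ + 1) - 1) = (1 + r) ^ (-(κ + 2)) := by
      rw [show -(κ + 1) - 1 = -(κ + 2) by ring]
    rw [e0, e1, e2, e3, e4]
    field_simp
    ring
  rw [key]
  have hP : (0 : ℝ) < r ^ (κ - 3) * (1 + r) ^ (-(κ + 2)) := by positivity
  have hA : ((n : ℝ) + κ - 3) * (1 + r) * (κ - 1 - r) - (κ + 1) * r * (κ - 1 - r) - r * (1 + r)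
      ≤ -(κ * (1 - κ)) := by
    nlinarith [mul_nonneg (sub_nonneg.2 hκ1.le) (sub_nonneg.2 hn'),
      mul_nonneg (mul_nonneg hr.le hr.le) (sub_nonneg.2 hn'),
      mul_nonneg hr.le (mul_nonneg (by linarith : (0:ℝ) ≤ (n : ℝ) + κ - 3) (by linarith : (0:ℝ) ≤ 2 - κ)),
      mul_nonneg hr.le (mul_self_nonneg κ)]
  nlinarith [mul_le_mul_of_nonneg_left hA hP.le]
end

section
/- Let 0 ≤ γ < 1. There is a constant C depending only on γ such that for all x, z ∈ ℝ^3 with |z| ≤ 1 and x ≠ 0, one has ∫_0^1 |x + θ z|^(-γ) dθ ≤ C |x|^(-γ). -/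
open MeasureTheory intervalIntegral Set Real

private lemma base_int {γ : ℝ} (hγ1 : γ < 1) (a b : ℝ) :
    IntervalIntegrable (fun s : ℝ => s ^ (-γ)) volume a b :=
  intervalIntegral.intervalIntegrable_rpow' (by linarith)

private lemma pieceR {γ : ℝ} (hγ1 : γ < 1) {t₀ p q : ℝ} (htp : t₀ ≤ p) (hpq : p ≤ q) :
    IntervalIntegrable (fun θ => |θ - t₀| ^ (-γ)) volume p q ∧
    ∫ θ in p..q, |θ - t₀| ^ (-γ)
      = ((q - t₀) ^ (1 - γ) - (p - t₀) ^ (1 - γ)) / (1 - γ) := by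
  have heq : EqOn (fun θ : ℝ => |θ - t₀| ^ (-γ)) (fun θ => (θ - t₀) ^ (-γ)) (uIcc p q) := by
    intro θ hθ
    rw [uIcc_of_le hpq] at hθ
    have h0 : 0 ≤ θ - t₀ := by have := hθ.1; linarith
    simp [abs_of_nonneg h0]
  have h1 : IntervalIntegrable (fun θ : ℝ => (θ - t₀) ^ (-γ)) volume p q := by
    have := (base_int hγ1 (p - t₀) (q - t₀)).comp_sub_right t₀
    simpa using this
  constructor
  · refine h1.congr ?_
    intro θ hθ
    exact (heq (uIoc_subset_uIcc hθ)).symm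
  · rw [integral_congr heq,
      intervalIntegral.integral_comp_sub_right (fun s : ℝ => s ^ (-γ)) t₀,
      integral_rpow (Or.inl (by linarith)), show -γ + 1 = 1 - γ by ring]

private lemma pieceL {γ : ℝ} (hγ1 : γ < 1) {t₀ p q : ℝ} (hpq : p ≤ q) (hq : q ≤ t₀) :
    IntervalIntegrable (fun θ => |θ - t₀| ^ (-γ)) volume p q ∧
    ∫ θ in p..q, |θ - t₀| ^ (-γ)
      = ((t₀ - p) ^ (1 - γ) - (t₀ - q) ^ (1 - γ)) / (1 - γ) := by
  have heq : EqOn (fun θ : ℝ => |θ - t₀| ^ (-γ)) (fun θ => (t₀ - θ) ^ (-γ)) (uIcc p q) := by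
    intro θ hθ
    rw [uIcc_of_le hpq] at hθ
    have h0 : θ - t₀ ≤ 0 := by have := hθ.2; linarith
    dsimp
    rw [abs_of_nonpos h0, neg_sub]
  have h1 : IntervalIntegrable (fun θ : ℝ => (t₀ - θ) ^ (-γ)) volume p q := by
    have := (base_int hγ1 (t₀ - p) (t₀ - q)).comp_sub_left t₀
    simpa using this
  constructor
  · refine h1.congr ?_
    intro θ hθ
    exact (heq (uIoc_subset_uIcc hθ)).symm
  · rw [integral_congr heq,
      intervalIntegral.integral_comp_sub_left (fun s : ℝ => s ^ (-γ)) t₀,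
      integral_rpow (Or.inl (by linarith)), show -γ + 1 = 1 - γ by ring]

private lemma oneD {γ : ℝ} (hγ0 : 0 ≤ γ) (hγ1 : γ < 1) {t₀ : ℝ} (ht : |t₀| ≤ 2) :
    IntervalIntegrable (fun θ => |θ - t₀| ^ (-γ)) volume 0 1 ∧
    ∫ θ in (0:ℝ)..1, |θ - t₀| ^ (-γ) ≤ 6 / (1 - γ) := by
  have h1γ : 0 < 1 - γ := by linarith
  have habs := abs_le.mp ht
  rcases le_or_gt t₀ 0 with h | h
  · obtain ⟨hint, hval⟩ := pieceR hγ1 h zero_le_one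
    refine ⟨hint, ?_⟩
    rw [hval]
    have hb : (1 - t₀ : ℝ) ^ (1 - γ) ≤ 6 := by
      calc (1 - t₀ : ℝ) ^ (1 - γ) ≤ (3 : ℝ) ^ (1 - γ) :=
            Real.rpow_le_rpow (by linarith) (by linarith) h1γ.le
        _ ≤ (3 : ℝ) ^ (1 : ℝ) :=
            Real.rpow_le_rpow_of_exponent_le (by norm_num) (by linarith)
        _ ≤ 6 := by rw [Real.rpow_one]; norm_num
    have hnn : (0:ℝ) ≤ (0 - t₀ : ℝ) ^ (1 - γ) := Real.rpow_nonneg (by linarith) _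
    refine div_le_div_of_nonneg_right ?_ h1γ.le
    linarith
  · rcases le_or_gt 1 t₀ with h' | h'
    · obtain ⟨hint, hval⟩ := pieceL hγ1 zero_le_one h'
      refine ⟨hint, ?_⟩
      rw [hval]
      have hb : (t₀ - 0 : ℝ) ^ (1 - γ) ≤ 6 := by
        calc (t₀ - 0 : ℝ) ^ (1 - γ) ≤ (3 : ℝ) ^ (1 - γ) :=
              Real.rpow_le_rpow (by linarith) (by linarith) h1γ.le
          _ ≤ (3 : ℝ) ^ (1 : ℝ) :=
              Real.rpow_le_rpow_of_exponent_le (by norm_num) (by linarith)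
          _ ≤ 6 := by rw [Real.rpow_one]; norm_num
      have hnn : (0:ℝ) ≤ (t₀ - 1 : ℝ) ^ (1 - γ) := Real.rpow_nonneg (by linarith) _
      refine div_le_div_of_nonneg_right ?_ h1γ.le
      linarith
    · obtain ⟨hintL, hvalL⟩ := pieceL hγ1 (le_of_lt h) (le_refl t₀)
      obtain ⟨hintR, hvalR⟩ := pieceR hγ1 (le_refl t₀) h'.le
      refine ⟨hintL.trans hintR, ?_⟩
      rw [← intervalIntegral.integral_add_adjacent_intervals hintL hintR, hvalL, hvalR]
      have e0 : (t₀ - t₀ : ℝ) ^ (1 - γ) = 0 := by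
        rw [sub_self, Real.zero_rpow (by linarith)]
      have b1 : (t₀ - 0 : ℝ) ^ (1 - γ) ≤ 1 :=
        Real.rpow_le_one (by linarith) (by linarith) h1γ.le
      have b2 : (1 - t₀ : ℝ) ^ (1 - γ) ≤ 1 :=
        Real.rpow_le_one (by linarith) (by linarith) h1γ.le
      rw [e0, ← add_div]
      refine div_le_div_of_nonneg_right ?_ h1γ.le
      linarith

theorem stmt6 (γ : ℝ) (hγ0 : 0 ≤ γ) (hγ1 : γ < 1) :
    ∃ C > 0, ∀ x z : EuclideanSpace ℝ (Fin 3), ‖z‖ ≤ 1 → x ≠ 0 →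
      ∫ θ in (0:ℝ)..1, ‖x + θ • z‖ ^ (-γ) ≤ C * ‖x‖ ^ (-γ) := by
  have h1γ : 0 < 1 - γ := by linarith
  refine ⟨14 / (1 - γ), div_pos (by norm_num) h1γ, fun x z hz hx => ?_⟩
  have hx0 : 0 < ‖x‖ := norm_pos_iff.mpr hx
  have hxg : 0 < ‖x‖ ^ (-γ) := Real.rpow_pos_of_pos hx0 _
  have h2γ : (2:ℝ) ^ γ ≤ 2 := by
    calc (2:ℝ) ^ γ ≤ (2:ℝ) ^ (1:ℝ) := Real.rpow_le_rpow_of_exponent_le one_le_two hγ1.le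
      _ = 2 := Real.rpow_one 2
  have key : (‖x‖ / 2) ^ (-γ) = 2 ^ γ * ‖x‖ ^ (-γ) := by
    rw [Real.div_rpow (norm_nonneg x) (by norm_num : (0:ℝ) ≤ 2),
      Real.rpow_neg (by norm_num : (0:ℝ) ≤ 2), div_eq_mul_inv, inv_inv, mul_comm]
  by_cases hcase : 2 * ‖z‖ ≤ ‖x‖
  · -- the far case : ‖x + θ • z‖ ≥ ‖x‖/2
    have hlb : ∀ θ ∈ Icc (0:ℝ) 1, ‖x‖ / 2 ≤ ‖x + θ • z‖ := by
      intro θ hθ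
      have h1 : ‖x‖ - ‖θ • z‖ ≤ ‖x + θ • z‖ := by
        have := norm_sub_norm_le x (-(θ • z))
        simpa [sub_neg_eq_add] using this
      have h2 : ‖θ • z‖ ≤ ‖z‖ := by
        rw [norm_smul, Real.norm_eq_abs, abs_of_nonneg hθ.1]
        nlinarith [norm_nonneg z, hθ.2]
      nlinarith [norm_nonneg z]
    have hcont : ContinuousOn (fun θ : ℝ => ‖x + θ • z‖ ^ (-γ)) (uIcc (0:ℝ) 1) := by
      apply ContinuousOn.rpow_const
      · exact (continuous_const.add (continuous_id.smul continuous_const)).norm.continuousOn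
      · intro θ hθ
        rw [uIcc_of_le zero_le_one] at hθ
        exact Or.inl (ne_of_gt (lt_of_lt_of_le (by positivity) (hlb θ hθ)))
    have hfint : IntervalIntegrable (fun θ : ℝ => ‖x + θ • z‖ ^ (-γ)) volume 0 1 :=
      hcont.intervalIntegrable
    have hmono := intervalIntegral.integral_mono_on zero_le_one hfint
      (_root_.intervalIntegrable_const (c := (‖x‖ / 2) ^ (-γ)))
      (fun θ hθ => Real.rpow_le_rpow_of_nonpos (by positivity) (hlb θ hθ) (by linarith))
    rw [intervalIntegral.integral_const] at hmono
    simp only [sub_zero, one_smul] at hmono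
    refine hmono.trans ?_
    rw [key]
    have hC2 : (2:ℝ) ≤ 14 / (1 - γ) := by
      rw [le_div_iff₀ h1γ]; nlinarith
    calc 2 ^ γ * ‖x‖ ^ (-γ) ≤ 2 * ‖x‖ ^ (-γ) := by nlinarith
      _ ≤ 14 / (1 - γ) * ‖x‖ ^ (-γ) := by nlinarith
  · -- the near case : ‖x‖ < 2‖z‖
    push_neg at hcase
    have hz0 : 0 < ‖z‖ := by nlinarith
    set u : EuclideanSpace ℝ (Fin 3) := ‖z‖⁻¹ • z with hu
    have hnu : ‖u‖ = 1 := by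
      rw [hu, norm_smul, norm_inv, norm_norm, inv_mul_cancel₀ hz0.ne']
    set t₀ : ℝ := -(inner ℝ x u : ℝ) / ‖z‖ with ht₀def
    have hzu : (inner ℝ z u : ℝ) = ‖z‖ := by
      rw [hu, real_inner_smul_right, real_inner_self_eq_norm_mul_norm]
      field_simp
    have hinner : ∀ θ : ℝ, (inner ℝ (x + θ • z) u : ℝ) = ‖z‖ * (θ - t₀) := by
      intro θ
      rw [inner_add_left, real_inner_smul_left, hzu, ht₀def]
      field_simp
      ring
    have hlow : ∀ θ : ℝ, ‖z‖ * |θ - t₀| ≤ ‖x + θ • z‖ := by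
      intro θ
      have h1 : |(inner ℝ (x + θ • z) u : ℝ)| ≤ ‖x + θ • z‖ := by
        have := abs_real_inner_le_norm (x + θ • z) u
        rwa [hnu, mul_one] at this
      rw [hinner θ, abs_mul, abs_of_nonneg hz0.le] at h1
      exact h1
    have ht2 : |t₀| ≤ 2 := by
      have hcb : |(inner ℝ x u : ℝ)| ≤ ‖x‖ := by
        have := abs_real_inner_le_norm x u
        rwa [hnu, mul_one] at this
      rw [ht₀def, abs_div, abs_neg, abs_norm, div_le_iff₀ hz0]
      nlinarith
    obtain ⟨hgint0, hgval⟩ := oneD hγ0 hγ1 ht2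
    obtain ⟨K, hK⟩ : ∃ K : ℝ, K = 2 ^ γ * ‖x‖ ^ (-γ) := ⟨_, rfl⟩
    have hKpos : 0 < K := by rw [hK]; positivity
    have hgint : IntervalIntegrable (fun θ : ℝ => K * |θ - t₀| ^ (-γ)) volume 0 1 :=
      hgint0.const_mul K
    have hae : ∀ᵐ θ : ℝ, θ ≠ t₀ := by
      refine ae_iff.2 ?_
      simp only [not_not]
      have hset : {a : ℝ | a = t₀} = {t₀} := by ext a; simp
      rw [hset]
      exact measure_singleton t₀
    have hzK : ‖z‖ ^ (-γ) ≤ K := by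
      rw [hK, ← key]
      exact Real.rpow_le_rpow_of_nonpos (by positivity) (by linarith) (by linarith)
    clear key
    have hptwise : ∀ᵐ θ : ℝ, ‖x + θ • z‖ ^ (-γ) ≤ K * |θ - t₀| ^ (-γ) := by
      filter_upwards [hae] with θ hθ
      have habs : 0 < |θ - t₀| := abs_pos.mpr (sub_ne_zero.mpr hθ)
      have h1 : ‖x + θ • z‖ ^ (-γ) ≤ (‖z‖ * |θ - t₀|) ^ (-γ) :=
        Real.rpow_le_rpow_of_nonpos (by positivity) (hlow θ) (by linarith)
      have h2 : (‖z‖ * |θ - t₀|) ^ (-γ) = ‖z‖ ^ (-γ) * |θ - t₀| ^ (-γ) :=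
        Real.mul_rpow hz0.le habs.le
      have h3 : (0:ℝ) ≤ |θ - t₀| ^ (-γ) := Real.rpow_nonneg habs.le _
      calc ‖x + θ • z‖ ^ (-γ) ≤ ‖z‖ ^ (-γ) * |θ - t₀| ^ (-γ) := by rw [← h2]; exact h1
        _ ≤ K * |θ - t₀| ^ (-γ) := mul_le_mul_of_nonneg_right hzK h3
    have hbmeas : Measurable (fun θ : ℝ => ‖x + θ • z‖) :=
      (continuous_const.add (continuous_id.smul continuous_const)).norm.measurable
    have hfmeas : AEStronglyMeasurable (fun θ : ℝ => ‖x + θ • z‖ ^ (-γ))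
        (volume.restrict (Ioc (0:ℝ) 1)) :=
      (hbmeas.pow_const _).aestronglyMeasurable
    have hfint : IntervalIntegrable (fun θ : ℝ => ‖x + θ • z‖ ^ (-γ)) volume 0 1 := by
      rw [intervalIntegrable_iff_integrableOn_Ioc_of_le zero_le_one]
      have hg' : IntegrableOn (fun θ : ℝ => K * |θ - t₀| ^ (-γ)) (Ioc (0:ℝ) 1) volume := by
        rwa [← intervalIntegrable_iff_integrableOn_Ioc_of_le zero_le_one]
      refine hg'.mono' hfmeas ?_
      refine ae_restrict_of_ae ?_
      filter_upwards [hptwise] with θ hθ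
      rwa [Real.norm_eq_abs, abs_of_nonneg (Real.rpow_nonneg (norm_nonneg _) _)]
    have hmono := intervalIntegral.integral_mono_ae zero_le_one hfint hgint hptwise
    rw [intervalIntegral.integral_const_mul] at hmono
    refine hmono.trans ?_
    have hstep : K * ∫ θ in (0:ℝ)..1, |θ - t₀| ^ (-γ) ≤ K * (6 / (1 - γ)) :=
      mul_le_mul_of_nonneg_left hgval hKpos.le
    refine hstep.trans ?_
    rw [hK]
    have h6 : (0:ℝ) ≤ ‖x‖ ^ (-γ) * (6 / (1 - γ)) := by positivity
    calc (2:ℝ) ^ γ * ‖x‖ ^ (-γ) * (6 / (1 - γ))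
        ≤ 2 * ‖x‖ ^ (-γ) * (6 / (1 - γ)) := by nlinarith
      _ = 12 / (1 - γ) * ‖x‖ ^ (-γ) := by ring
      _ ≤ 14 / (1 - γ) * ‖x‖ ^ (-γ) := by
          exact mul_le_mul_of_nonneg_right
            (div_le_div_of_nonneg_right (by norm_num) h1γ.le) hxg.le
end

section
/- Let 0 ≤ γ < 1 and β ∈ ℝ. There is a constant C depending only on γ and β such that for all x, z ∈ ℝ^3 with |z| ≤ 1 and x ≠ 0, ∫_0^1 |x+θz|^(-γ) ⟨x+θz⟩^(-β) dθ ≤ C |x|^(-γ) ⟨x⟩^(-β), where ⟨y⟩ = (1+|y|^2)^(1/2). -/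
open MeasureTheory Set

/-- `|u| ^ (-γ)` is interval integrable on any interval when `γ < 1`. -/
lemma absRpowInt {γ : ℝ} (hγ : γ < 1) (c d : ℝ) :
    IntervalIntegrable (fun u : ℝ => |u| ^ (-γ)) volume c d := by
  have key : ∀ t : ℝ, 0 ≤ t → IntervalIntegrable (fun u : ℝ => |u| ^ (-γ)) volume 0 t := by
    intro t ht
    have h1 : IntervalIntegrable (fun u : ℝ => u ^ (-γ)) volume 0 t :=
      intervalIntegral.intervalIntegrable_rpow' (by linarith)
    rw [intervalIntegrable_iff, uIoc_of_le ht] at h1 ⊢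
    exact h1.congr_fun (fun u hu => by
      show u ^ (-γ) = |u| ^ (-γ)
      rw [abs_of_nonneg hu.1.le]) measurableSet_Ioc
  have key2 : ∀ t : ℝ, IntervalIntegrable (fun u : ℝ => |u| ^ (-γ)) volume 0 t := by
    intro t
    rcases le_total 0 t with ht | ht
    · exact key t ht
    · rw [IntervalIntegrable.iff_comp_neg]
      have h2 : IntervalIntegrable (fun x : ℝ => |(-x)| ^ (-γ)) volume 0 (-t) := by
        simpa [abs_neg] using key (-t) (by linarith)
      simpa using h2
  exact (key2 c).symm.trans (key2 d)

lemma absRpowIntVal {γ : ℝ} (hγ : γ < 1) (t : ℝ) (ht : 0 ≤ t) :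
    ∫ u in (0:ℝ)..t, |u| ^ (-γ) = t ^ (1 - γ) / (1 - γ) := by
  have h1 : ∫ u in (0:ℝ)..t, |u| ^ (-γ) = ∫ u in (0:ℝ)..t, u ^ (-γ) := by
    apply intervalIntegral.integral_congr
    intro u hu
    rw [uIcc_of_le ht] at hu
    show |u| ^ (-γ) = u ^ (-γ)
    rw [abs_of_nonneg hu.1]
  rw [h1, integral_rpow (Or.inl (by linarith))]
  rw [Real.zero_rpow (by intro h; linarith : -γ + 1 ≠ 0)]
  rw [show -γ + 1 = 1 - γ by ring]
  ring

/-- Integrability of `θ ↦ |a - s θ| ^ (-γ)` on `[0,1]`. -/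
lemma oneDInt {γ : ℝ} (hγ : γ < 1) (a s : ℝ) :
    IntervalIntegrable (fun θ : ℝ => |a - s * θ| ^ (-γ)) volume 0 1 := by
  rcases eq_or_ne s 0 with hs | hs
  · simp only [hs, zero_mul, sub_zero]
    exact intervalIntegrable_const
  · have h1 := (absRpowInt hγ a (a - s)).comp_sub_left a
    have h2 := h1.comp_mul_left (c := s)
    simpa [sub_sub_cancel, div_self hs] using h2

/-- Key 1D estimate: `∫₀¹ |a - sθ|^{-γ} dθ ≤ (3·2^γ/(1-γ)) a^{-γ}`. -/
lemma oneD_s7 {γ : ℝ} (hγ0 : 0 ≤ γ) (hγ : γ < 1) {a s : ℝ} (ha : 0 < a) (hs0 : 0 ≤ s)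
    (hs1 : s ≤ 1) :
    ∫ θ in (0:ℝ)..1, |a - s * θ| ^ (-γ) ≤ 3 * 2 ^ γ / (1 - γ) * a ^ (-γ) := by
  have h1γ : 0 < 1 - γ := by linarith
  have haγ : 0 ≤ a ^ (-γ) := Real.rpow_nonneg ha.le _
  have h2γ : (0:ℝ) < 2 ^ γ := Real.rpow_pos_of_pos (by norm_num) _
  have hhalf : (a / 2) ^ (-γ) = 2 ^ γ * a ^ (-γ) := by
    rw [div_eq_mul_inv, Real.mul_rpow ha.le (by norm_num : (0:ℝ) ≤ 2⁻¹),
      Real.inv_rpow (by norm_num : (0:ℝ) ≤ 2), Real.rpow_neg (by norm_num : (0:ℝ) ≤ 2), inv_inv,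
      mul_comm]
  rcases le_or_gt s (a / 2) with hcase | hcase
  · -- constant bound
    have hconst : ∀ θ ∈ Set.Icc (0:ℝ) 1, |a - s * θ| ^ (-γ) ≤ (a / 2) ^ (-γ) := by
      intro θ hθ
      apply Real.rpow_le_rpow_of_nonpos (by positivity) ?_ (neg_nonpos.mpr hγ0)
      have hst : s * θ ≤ s := mul_le_of_le_one_right hs0 hθ.2
      have : a / 2 ≤ a - s * θ := by linarith
      exact this.trans (le_abs_self _)
    calc ∫ θ in (0:ℝ)..1, |a - s * θ| ^ (-γ)
        ≤ ∫ _θ in (0:ℝ)..1, (a / 2) ^ (-γ) :=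
          intervalIntegral.integral_mono_on zero_le_one (oneDInt hγ a s)
            intervalIntegrable_const hconst
      _ = (a / 2) ^ (-γ) := by simp
      _ ≤ 3 * 2 ^ γ / (1 - γ) * a ^ (-γ) := by
          rw [hhalf, div_mul_eq_mul_div, le_div_iff₀ h1γ]
          nlinarith [mul_nonneg h2γ.le haγ]
  · -- substitution
    have hs : 0 < s := lt_trans (by positivity) hcase
    have e1 : ∫ θ in (0:ℝ)..1, |a - s * θ| ^ (-γ)
        = s⁻¹ * ∫ u in (0:ℝ)..s, |a - u| ^ (-γ) := by
      have h := intervalIntegral.integral_comp_mul_left (a := 0) (b := 1)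
        (fun u : ℝ => |a - u| ^ (-γ)) hs.ne'
      simpa [smul_eq_mul] using h
    have e2 : ∫ u in (0:ℝ)..s, |a - u| ^ (-γ) = ∫ v in (a - s)..a, |v| ^ (-γ) := by
      have h := intervalIntegral.integral_comp_sub_left (a := 0) (b := s)
        (fun v : ℝ => |v| ^ (-γ)) a
      simpa using h
    have e3 : ∫ v in (a - s)..a, |v| ^ (-γ) ≤ ∫ v in (-s)..(2 * s), |v| ^ (-γ) :=
      intervalIntegral.integral_mono_interval (by linarith) (by linarith) (by linarith)
        (Filter.Eventually.of_forall fun v => Real.rpow_nonneg (abs_nonneg v) _)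
        (absRpowInt hγ _ _)
    have e4 : ∫ v in (-s)..(2 * s), |v| ^ (-γ)
        = (∫ v in (-s)..(0:ℝ), |v| ^ (-γ)) + ∫ v in (0:ℝ)..(2 * s), |v| ^ (-γ) :=
      (intervalIntegral.integral_add_adjacent_intervals (absRpowInt hγ _ _)
        (absRpowInt hγ _ _)).symm
    have e5 : ∫ v in (-s)..(0:ℝ), |v| ^ (-γ) = s ^ (1 - γ) / (1 - γ) := by
      have h := intervalIntegral.integral_comp_neg (a := 0) (b := s)
        (fun v : ℝ => |v| ^ (-γ))
      simp only [abs_neg, neg_zero] at h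
      rw [← h, absRpowIntVal hγ s hs.le]
    have e6 : ∫ v in (0:ℝ)..(2 * s), |v| ^ (-γ) = (2 * s) ^ (1 - γ) / (1 - γ) :=
      absRpowIntVal hγ (2 * s) (by positivity)
    have h2s : (2 * s) ^ (1 - γ) = 2 ^ (1 - γ) * s ^ (1 - γ) :=
      Real.mul_rpow (by norm_num) hs.le
    have h21 : (2:ℝ) ^ (1 - γ) ≤ 2 := by
      calc (2:ℝ) ^ (1 - γ) ≤ (2:ℝ) ^ (1:ℝ) :=
            Real.rpow_le_rpow_of_exponent_le one_le_two (by linarith)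
        _ = 2 := Real.rpow_one 2
    have hss : s⁻¹ * s ^ (1 - γ) = s ^ (-γ) := by
      rw [show (1:ℝ) - γ = 1 + (-γ) by ring, Real.rpow_add hs, Real.rpow_one]
      field_simp
    have hsa : s ^ (-γ) ≤ 2 ^ γ * a ^ (-γ) := by
      rw [← hhalf]
      exact Real.rpow_le_rpow_of_nonpos (by positivity) hcase.le (neg_nonpos.mpr hγ0)
    have hsγ : 0 ≤ s ^ (-γ) := Real.rpow_nonneg hs.le _
    have h2γ' : (0:ℝ) ≤ 2 ^ (1 - γ) := Real.rpow_nonneg (by norm_num) _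
    rw [e1, e2]
    calc s⁻¹ * ∫ v in (a - s)..a, |v| ^ (-γ)
        ≤ s⁻¹ * (s ^ (1 - γ) / (1 - γ) + (2 * s) ^ (1 - γ) / (1 - γ)) := by
          apply mul_le_mul_of_nonneg_left _ (inv_nonneg.mpr hs.le)
          calc ∫ v in (a - s)..a, |v| ^ (-γ) ≤ ∫ v in (-s)..(2 * s), |v| ^ (-γ) := e3
            _ = s ^ (1 - γ) / (1 - γ) + (2 * s) ^ (1 - γ) / (1 - γ) := by rw [e4, e5, e6]
      _ = (s⁻¹ * s ^ (1 - γ)) * (1 + 2 ^ (1 - γ)) / (1 - γ) := by rw [h2s]; ring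
      _ = s ^ (-γ) * (1 + 2 ^ (1 - γ)) / (1 - γ) := by rw [hss]
      _ ≤ 3 * 2 ^ γ / (1 - γ) * a ^ (-γ) := by
          rw [show 3 * 2 ^ γ / (1 - γ) * a ^ (-γ) = 3 * 2 ^ γ * a ^ (-γ) / (1 - γ) by ring]
          apply (div_le_div_iff_of_pos_right h1γ).mpr
          nlinarith [mul_le_mul_of_nonneg_left h21 hsγ, hsa, hsγ, h2γ']

/-- Japanese-bracket comparison: if `|r - a| ≤ 1` then `⟨r⟩^{-β} ≤ 5^{|β|/2} ⟨a⟩^{-β}`. -/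
lemma bracketLemma (β : ℝ) {a r : ℝ} (ha : 0 ≤ a) (hr : 0 ≤ r) (h : |r - a| ≤ 1) :
    Real.sqrt (1 + r ^ 2) ^ (-β) ≤ Real.sqrt 5 ^ |β| * Real.sqrt (1 + a ^ 2) ^ (-β) := by
  have habs := abs_le.mp h
  have hA1 : (1:ℝ) ≤ Real.sqrt (1 + a ^ 2) := Real.one_le_sqrt.mpr (by nlinarith)
  have hR1 : (1:ℝ) ≤ Real.sqrt (1 + r ^ 2) := Real.one_le_sqrt.mpr (by nlinarith)
  have hA0 : (0:ℝ) < Real.sqrt (1 + a ^ 2) := lt_of_lt_of_le one_pos hA1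
  have hR0 : (0:ℝ) < Real.sqrt (1 + r ^ 2) := lt_of_lt_of_le one_pos hR1
  have h50 : (0:ℝ) < Real.sqrt 5 := Real.sqrt_pos.mpr (by norm_num)
  have hra2 : r ^ 2 ≤ (a + 1) ^ 2 := by nlinarith [habs.2, hr, ha]
  have har2 : a ^ 2 ≤ (r + 1) ^ 2 := by nlinarith [habs.1, hr, ha]
  have key1 : Real.sqrt (1 + r ^ 2) ≤ Real.sqrt 5 * Real.sqrt (1 + a ^ 2) := by
    rw [← Real.sqrt_mul (by norm_num : (0:ℝ) ≤ 5)]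
    exact Real.sqrt_le_sqrt (by nlinarith [hra2, sq_nonneg (2 * a - 1)])
  have key2 : Real.sqrt (1 + a ^ 2) ≤ Real.sqrt 5 * Real.sqrt (1 + r ^ 2) := by
    rw [← Real.sqrt_mul (by norm_num : (0:ℝ) ≤ 5)]
    exact Real.sqrt_le_sqrt (by nlinarith [har2, sq_nonneg (2 * r - 1)])
  rcases le_or_gt 0 β with hβ | hβ
  · rw [abs_of_nonneg hβ]
    have h1 : Real.sqrt (1 + a ^ 2) / Real.sqrt 5 ≤ Real.sqrt (1 + r ^ 2) := by
      rw [div_le_iff₀ h50]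
      calc Real.sqrt (1 + a ^ 2) ≤ Real.sqrt 5 * Real.sqrt (1 + r ^ 2) := key2
        _ = Real.sqrt (1 + r ^ 2) * Real.sqrt 5 := mul_comm _ _
    calc Real.sqrt (1 + r ^ 2) ^ (-β)
        ≤ (Real.sqrt (1 + a ^ 2) / Real.sqrt 5) ^ (-β) :=
          Real.rpow_le_rpow_of_nonpos (by positivity) h1 (neg_nonpos.mpr hβ)
      _ = Real.sqrt 5 ^ β * Real.sqrt (1 + a ^ 2) ^ (-β) := by
          rw [Real.div_rpow hA0.le (Real.sqrt_nonneg 5), Real.rpow_neg (Real.sqrt_nonneg 5),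
            div_eq_mul_inv, inv_inv, mul_comm]
  · rw [abs_of_neg hβ]
    have : -β = -β := rfl
    calc Real.sqrt (1 + r ^ 2) ^ (-β)
        ≤ (Real.sqrt 5 * Real.sqrt (1 + a ^ 2)) ^ (-β) :=
          Real.rpow_le_rpow hR0.le key1 (by linarith)
      _ = Real.sqrt 5 ^ (-β) * Real.sqrt (1 + a ^ 2) ^ (-β) :=
          Real.mul_rpow h50.le hA0.le


theorem stmt7 (γ β : ℝ) (hγ0 : 0 ≤ γ) (hγ1 : γ < 1) :
    ∃ C > 0, ∀ x z : EuclideanSpace ℝ (Fin 3), ‖z‖ ≤ 1 → x ≠ 0 →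
      ∫ θ in (0:ℝ)..1,
          ‖x + θ • z‖ ^ (-γ) * (Real.sqrt (1 + ‖x + θ • z‖ ^ 2)) ^ (-β)
        ≤ C * ‖x‖ ^ (-γ) * (Real.sqrt (1 + ‖x‖ ^ 2)) ^ (-β) := by
  have h1γ : 0 < 1 - γ := by linarith
  have h50 : (0:ℝ) < Real.sqrt 5 := Real.sqrt_pos.mpr (by norm_num)
  refine ⟨Real.sqrt 5 ^ |β| * (3 * 2 ^ γ / (1 - γ)), by positivity, ?_⟩
  intro x z hz hx
  have ha : 0 < ‖x‖ := norm_pos_iff.mpr hx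
  have hs0 : 0 ≤ ‖z‖ := norm_nonneg z
  set a := ‖x‖ with ha'
  set s := ‖z‖ with hs'
  set K : ℝ := Real.sqrt 5 ^ |β| * Real.sqrt (1 + a ^ 2) ^ (-β) with hK
  have hK0 : 0 ≤ K := by positivity
  have hgint : IntervalIntegrable (fun θ : ℝ => K * |a - s * θ| ^ (-γ)) volume 0 1 :=
    (oneDInt hγ1 a s).const_mul K
  rw [intervalIntegral.integral_of_le (zero_le_one' ℝ)]
  have step1 :
      ∫ θ in Set.Ioc (0:ℝ) 1,
          ‖x + θ • z‖ ^ (-γ) * (Real.sqrt (1 + ‖x + θ • z‖ ^ 2)) ^ (-β)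
        ≤ ∫ θ in Set.Ioc (0:ℝ) 1, K * |a - s * θ| ^ (-γ) := by
    apply integral_mono_of_nonneg
    · exact Filter.Eventually.of_forall fun θ =>
        mul_nonneg (Real.rpow_nonneg (norm_nonneg _) _)
          (Real.rpow_nonneg (Real.sqrt_nonneg _) _)
    · exact hgint.1
    · have hae : ∀ᵐ θ ∂(volume.restrict (Set.Ioc (0:ℝ) 1)), a - s * θ ≠ 0 := by
        rcases eq_or_ne s 0 with h0 | h0
        · exact Filter.Eventually.of_forall fun θ => by
            rw [h0, zero_mul, sub_zero]; exact ha.ne'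
        · apply Filter.Eventually.filter_mono (ae_mono Measure.restrict_le_self)
          rw [ae_iff]
          refine measure_mono_null (t := {a / s}) ?_ Real.volume_singleton
          intro θ hθ
          simp only [Set.mem_setOf_eq, not_not] at hθ
          have hθ' : θ = a / s := by
            field_simp
            linarith [hθ]
          simpa [Set.mem_singleton_iff] using hθ'
      filter_upwards [hae, ae_restrict_mem measurableSet_Ioc] with θ hθ0 hθmem
      have hnz : ‖θ • z‖ = θ * s := by
        rw [norm_smul, Real.norm_eq_abs, abs_of_pos hθmem.1]
      have h1 : |‖x + θ • z‖ - a| ≤ 1 := by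
        have h := abs_norm_sub_norm_le (x + θ • z) x
        rw [add_sub_cancel_left, hnz] at h
        refine h.trans ?_
        calc θ * s ≤ 1 * 1 := mul_le_mul hθmem.2 hz hs0 zero_le_one
          _ = 1 := mul_one 1
      have h2 : |a - s * θ| ≤ ‖x + θ • z‖ := by
        have h := abs_norm_sub_norm_le x (-(θ • z))
        rw [norm_neg, sub_neg_eq_add, hnz] at h
        calc |a - s * θ| = |a - θ * s| := by rw [mul_comm]
          _ ≤ ‖x + θ • z‖ := h
      have h3 : 0 < |a - s * θ| := abs_pos.mpr hθ0
      have bound1 : ‖x + θ • z‖ ^ (-γ) ≤ |a - s * θ| ^ (-γ) :=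
        Real.rpow_le_rpow_of_nonpos h3 h2 (neg_nonpos.mpr hγ0)
      have bound2 : (Real.sqrt (1 + ‖x + θ • z‖ ^ 2)) ^ (-β) ≤ K :=
        bracketLemma β ha.le (norm_nonneg _) h1
      calc ‖x + θ • z‖ ^ (-γ) * (Real.sqrt (1 + ‖x + θ • z‖ ^ 2)) ^ (-β)
          ≤ |a - s * θ| ^ (-γ) * K :=
            mul_le_mul bound1 bound2 (Real.rpow_nonneg (Real.sqrt_nonneg _) _)
              (Real.rpow_nonneg (abs_nonneg _) _)
        _ = K * |a - s * θ| ^ (-γ) := mul_comm _ _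
  refine step1.trans ?_
  rw [← intervalIntegral.integral_of_le (zero_le_one' ℝ),
    intervalIntegral.integral_const_mul]
  calc K * ∫ θ in (0:ℝ)..1, |a - s * θ| ^ (-γ)
      ≤ K * (3 * 2 ^ γ / (1 - γ) * a ^ (-γ)) :=
        mul_le_mul_of_nonneg_left (oneD_s7 hγ0 hγ1 ha hs0 hz) hK0
    _ = Real.sqrt 5 ^ |β| * (3 * 2 ^ γ / (1 - γ)) * a ^ (-γ) *
          Real.sqrt (1 + a ^ 2) ^ (-β) := by rw [hK]; ring
end
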